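/- Let p > 2, 0 < d₀ ≤ ∞, let q : (0, d₀) → (0, ∞] be measurable, and let Φ : (0, d₀) → (0, ∞) be a nondecreasing function such that for almost every t ∈ (0, d₀) the derivative Φ′(t) exists and satisfies 2·π^{(p−2)/(2(p−1))} / ( t^{1/(p−1)} · q(t)^{1/(p−1)} ) ≤ Φ′(t) / Φ(t)^{p/(2(p−1))}. Then for every r ∈ (0, d₀), Φ(r) ≥ π · ((p−2)/(p−1))^{2(p−1)/(p−2)} · ( ∫₀^r dt / ( t^{1/(p−1)} · q(t)^{1/(p−1)} ) )^{2(p−1)/(p−2)}. -/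

import Mathlib

open MeasureTheory Set ENNReal

/-! Raising `Φ` to the power `α = (p-2)/(2(p-1))` turns the differential inequality into a
lower bound for the derivative of `Φ ^ α`, because `(Φ ^ α)' = α Φ' / Φ ^ (p/(2(p-1)))`. The
derivative of the monotone function `Φ ^ α` integrates to at most its increment over `(0, r)`,
which is at most `Φ r ^ α` since `Φ ^ α ≥ 0`; raising the resulting bound to the power `1/α`
gives the claim. -/

theorem MonotoneOn.lintegral_deriv_le {f : ℝ → ℝ} {a b : ℝ} (hab : a ≤ b)
    (hf : MonotoneOn f (Icc a b)) :
    ∫⁻ x in Ioo a b, ENNReal.ofReal (deriv f x) ≤ ENNReal.ofReal (f b - f a) := by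
  have hnonneg : ∀ x ∈ Ioo a b, 0 ≤ deriv f x := fun x hx => by
    rw [← derivWithin_of_mem_nhds (Icc_mem_nhds hx.1 hx.2)]
    exact hf.derivWithin_nonneg
  rw [← uIcc_of_le hab] at hf
  rw [← ofReal_integral_eq_lintegral_ofReal
    (hf.intervalIntegrable_deriv.1.mono_set Ioo_subset_Ioc_self)
    ((ae_restrict_iff' measurableSet_Ioo).2 (ae_of_all _ hnonneg))]
  apply ENNReal.ofReal_le_ofReal
  rw [← integral_Ioc_eq_integral_Ioo, ← intervalIntegral.integral_of_le hab]
  have hfab : f a ≤ f b := hf left_mem_uIcc right_mem_uIcc hab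
  exact (uIcc_of_le (sub_nonneg.2 hfab) ▸ hf.intervalIntegral_deriv_mem_uIcc).2

theorem MonotoneOn.lintegral_deriv_le_sub_of_le {g : ℝ → ℝ} {a b m : ℝ} (hab : a < b)
    (hg : MonotoneOn g (Ioc a b)) (hm : ∀ x ∈ Ioc a b, m ≤ g x) :
    ∫⁻ x in Ioo a b, ENNReal.ofReal (deriv g x) ≤ ENNReal.ofReal (g b - m) := by
  set G : ℝ → ℝ := fun x => if a < x then g (min x b) else m
  have hmin : ∀ x, a < x → min x b ∈ Ioc a b := fun x hx => ⟨lt_min hx hab, min_le_right _ _⟩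
  have hGmono : MonotoneOn G (Icc a b) := by
    intro x _ y _ hxy
    by_cases hx : a < x
    · simpa [G, hx, hx.trans_le hxy] using
        hg (hmin x hx) (hmin y (hx.trans_le hxy)) (min_le_min_right b hxy)
    · by_cases hy : a < y
      · simpa [G, hx, hy] using hm _ (hmin y hy)
      · simp [G, hx, hy]
  have hderiv : EqOn (deriv G) (deriv g) (Ioo a b) := by
    refine EqOn.deriv (fun x hx => ?_) isOpen_Ioo
    simp [G, hx.1, hx.2.le]
  calc ∫⁻ x in Ioo a b, ENNReal.ofReal (deriv g x)
      = ∫⁻ x in Ioo a b, ENNReal.ofReal (deriv G x) :=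
        setLIntegral_congr_fun measurableSet_Ioo fun x hx => by rw [hderiv hx]
    _ ≤ ENNReal.ofReal (G b - G a) := hGmono.lintegral_deriv_le hab.le
    _ = ENNReal.ofReal (g b - m) := by simp [G, hab]

theorem deriv_rpow_eq_mul_div {Φ : ℝ → ℝ} {t : ℝ} (α : ℝ) (hΦ : DifferentiableAt ℝ Φ t)
    (hpos : 0 < Φ t) :
    deriv (fun s => Φ s ^ α) t = α * (deriv Φ t / Φ t ^ (1 - α)) := by
  rw [deriv_rpow_const hΦ (Or.inl hpos.ne'), show α - 1 = -(1 - α) by ring,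
    Real.rpow_neg hpos.le]
  ring

theorem Real.mul_rpow_rpow_inv {a b α : ℝ} (ha : 0 ≤ a) (hb : 0 ≤ b) (hα : α ≠ 0) :
    (a * b ^ α) ^ α⁻¹ = b * a ^ α⁻¹ := by
  rw [Real.mul_rpow ha (Real.rpow_nonneg hb α), Real.rpow_rpow_inv hb hα, mul_comm]

theorem lintegral_le_rpow_of_le_deriv_div_rpow {Φ : ℝ → ℝ} {w : ℝ → ℝ≥0∞} {K : ℝ≥0∞}
    {α a b : ℝ} (hα : 0 < α) (hK : K ≠ ⊤) (hab : a < b) (hpos : ∀ t ∈ Ioc a b, 0 < Φ t)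
    (hmono : MonotoneOn Φ (Ioc a b))
    (h : ∀ᵐ t, t ∈ Ioo a b →
      DifferentiableAt ℝ Φ t ∧ K * w t ≤ ENNReal.ofReal (deriv Φ t / Φ t ^ (1 - α))) :
    ENNReal.ofReal α * K * ∫⁻ t in Ioo a b, w t ≤ ENNReal.ofReal (Φ b ^ α) := by
  have hmono_rpow : MonotoneOn (fun t => Φ t ^ α) (Ioc a b) := fun x hx y hy hxy =>
    Real.rpow_le_rpow (hpos x hx).le (hmono hx hy hxy) hα.le
  have hderiv : ∀ᵐ t, t ∈ Ioo a b →
      ENNReal.ofReal α * K * w t ≤ ENNReal.ofReal (deriv (fun s => Φ s ^ α) t) := by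
    filter_upwards [h] with t ht hmem
    obtain ⟨hdiff, hle⟩ := ht hmem
    rw [deriv_rpow_eq_mul_div α hdiff (hpos t (Ioo_subset_Ioc_self hmem)), ofReal_mul hα.le,
      mul_assoc]
    gcongr
  calc ENNReal.ofReal α * K * ∫⁻ t in Ioo a b, w t
      = ∫⁻ t in Ioo a b, ENNReal.ofReal α * K * w t :=
        (lintegral_const_mul' _ _ (mul_ne_top ofReal_ne_top hK)).symm
    _ ≤ ∫⁻ t in Ioo a b, ENNReal.ofReal (deriv (fun s => Φ s ^ α) t) :=
        setLIntegral_mono_ae' measurableSet_Ioo hderiv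
    _ ≤ ENNReal.ofReal (Φ b ^ α - 0) := hmono_rpow.lintegral_deriv_le_sub_of_le hab fun t ht =>
        Real.rpow_nonneg (hpos t ht).le α
    _ = ENNReal.ofReal (Φ b ^ α) := by rw [sub_zero]

theorem growth_from_differential_inequality_general
    (p : ℝ) (hp : 2 < p) (d₀ : ℝ≥0∞)
    (q : ℝ → ℝ≥0∞)
    (Φ : ℝ → ℝ)
    (hΦpos : ∀ t : ℝ, 0 < t → ENNReal.ofReal t < d₀ → 0 < Φ t)
    (hΦmono : MonotoneOn Φ {t : ℝ | 0 < t ∧ ENNReal.ofReal t < d₀})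
    (hΦ : ∀ᵐ t ∂(volume : Measure ℝ), 0 < t → ENNReal.ofReal t < d₀ →
      DifferentiableAt ℝ Φ t ∧
        ENNReal.ofReal (2 * Real.pi ^ ((p - 2) / (2 * (p - 1)))) *
            (ENNReal.ofReal t ^ (1 / (p - 1)) * q t ^ (1 / (p - 1)))⁻¹ ≤
          ENNReal.ofReal (deriv Φ t / Φ t ^ (p / (2 * (p - 1)))))
    (r : ℝ) (hr0 : 0 < r) (hr : ENNReal.ofReal r < d₀) :
    ENNReal.ofReal (Real.pi * ((p - 2) / (p - 1)) ^ (2 * (p - 1) / (p - 2))) *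
        (∫⁻ t in Set.Ioo (0 : ℝ) r,
          (ENNReal.ofReal t ^ (1 / (p - 1)) * q t ^ (1 / (p - 1)))⁻¹) ^
          (2 * (p - 1) / (p - 2)) ≤
      ENNReal.ofReal (Φ r) := by
  set α := (p - 2) / (2 * (p - 1))
  have hα : 0 < α := div_pos (by linarith) (by linarith)
  have hα_compl : p / (2 * (p - 1)) = 1 - α := by
    simp only [α]; field_simp [show p - 1 ≠ 0 by linarith]; ring
  have h2α : α * 2 = (p - 2) / (p - 1) := by simp only [α]; field_simp
  have hdom : Ioc 0 r ⊆ {t | 0 < t ∧ ENNReal.ofReal t < d₀} := fun t ht =>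
    ⟨ht.1, (ofReal_le_ofReal ht.2).trans_lt hr⟩
  have hbound := lintegral_le_rpow_of_le_deriv_div_rpow hα ofReal_ne_top hr0
    (fun t ht => hΦpos t (hdom ht).1 (hdom ht).2) (hΦmono.mono hdom) (by
      filter_upwards [hΦ] with t ht hmem
      rw [← hα_compl]
      exact ht hmem.1 (hdom (Ioo_subset_Ioc_self hmem)).2)
  rw [← ofReal_mul hα.le, ← mul_assoc, h2α] at hbound
  have hC : ENNReal.ofReal ((p - 2) / (p - 1) * Real.pi ^ α) ^ α⁻¹ =
      ENNReal.ofReal (Real.pi * ((p - 2) / (p - 1)) ^ α⁻¹) := by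
    have hratio : 0 ≤ (p - 2) / (p - 1) := div_nonneg (by linarith) (by linarith)
    rw [ofReal_rpow_of_nonneg (mul_nonneg hratio (by positivity)) (inv_nonneg.2 hα.le),
      Real.mul_rpow_rpow_inv hratio Real.pi_nonneg hα.ne']
  rw [show 2 * (p - 1) / (p - 2) = α⁻¹ from (inv_div _ _).symm, ← hC,
    ← mul_rpow_of_nonneg _ _ (inv_nonneg.2 hα.le), rpow_inv_le_iff hα,
    ofReal_rpow_of_nonneg (hΦpos r hr0 hr).le hα.le]
  exact hbound

/-- If `Φ : (0,d₀) → (0,∞)` is nondecreasing and satisfies the differential inequality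
`2 π^{(p-2)/(2(p-1))} / (t^{1/(p-1)} q(t)^{1/(p-1)}) ≤ Φ'(t)/Φ(t)^{p/(2(p-1))}` a.e., then
`Φ(r) ≥ π ((p-2)/(p-1))^{2(p-1)/(p-2)} (∫₀^r dt/(t^{1/(p-1)} q(t)^{1/(p-1)}))^{2(p-1)/(p-2)}`
for all `r ∈ (0,d₀)`. -/
theorem growth_from_differential_inequality
    (p : ℝ) (hp : 2 < p) (d₀ : ℝ≥0∞) (hd₀ : 0 < d₀)
    (q : ℝ → ℝ≥0∞) (hqmeas : Measurable q)
    (hqpos : ∀ t : ℝ, 0 < t → ENNReal.ofReal t < d₀ → 0 < q t)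
    (Φ : ℝ → ℝ)
    (hΦpos : ∀ t : ℝ, 0 < t → ENNReal.ofReal t < d₀ → 0 < Φ t)
    (hΦmono : MonotoneOn Φ {t : ℝ | 0 < t ∧ ENNReal.ofReal t < d₀})
    (hΦ : ∀ᵐ t ∂(volume : Measure ℝ), 0 < t → ENNReal.ofReal t < d₀ →
      DifferentiableAt ℝ Φ t ∧
        ENNReal.ofReal (2 * Real.pi ^ ((p - 2) / (2 * (p - 1)))) *
            (ENNReal.ofReal t ^ (1 / (p - 1)) * q t ^ (1 / (p - 1)))⁻¹ ≤
          ENNReal.ofReal (deriv Φ t / Φ t ^ (p / (2 * (p - 1)))))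
    (r : ℝ) (hr0 : 0 < r) (hr : ENNReal.ofReal r < d₀) :
    ENNReal.ofReal (Real.pi * ((p - 2) / (p - 1)) ^ (2 * (p - 1) / (p - 2))) *
        (∫⁻ t in Set.Ioo (0 : ℝ) r,
          (ENNReal.ofReal t ^ (1 / (p - 1)) * q t ^ (1 / (p - 1)))⁻¹) ^
          (2 * (p - 1) / (p - 2)) ≤
      ENNReal.ofReal (Φ r) :=
  growth_from_differential_inequality_general p hp d₀ q Φ hΦpos hΦmono hΦ r hr0 hr
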